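/- Let σ > 0 and let K₂(t) = (2σ/π) · (sin(σt)/(σt) − cos(σt)) / (σt)² for t ≠ 0, with K₂(0) = 2σ/(3π). Then K₂ ∈ L¹(ℝ) and its Fourier transform satisfies ∫_{-∞}^{∞} K₂(t) e^{−iξt} dt = 1 − ξ²/σ² for |ξ| ≤ σ, and = 0 for |ξ| > σ. -/

import Mathlib

open MeasureTheory Real Complex

/-- The kernel K₂ with removable singularity at 0. -/
noncomputable def K2 (σ : ℝ) (t : ℝ) : ℝ :=
  if t = 0 then 2 * σ / (3 * Real.pi)
  else (2 * σ / Real.pi) * (Real.sin (σ * t) / (σ * t) - Real.cos (σ * t)) / (σ * t) ^ 2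

/-- Antiderivative of `(1 - x²/σ²) e^{-icx}`. -/
noncomputable def F2 (σ c : ℝ) (x : ℝ) : ℂ :=
  Complex.exp (-Complex.I * c * x) *
    ((-Complex.I * c ^ 2 * x ^ 2 - 2 * c * x + 2 * Complex.I + Complex.I * c ^ 2 * σ ^ 2)
      / (c ^ 3 * σ ^ 2))

lemma F2_hasDerivAt (σ c : ℝ) (hσ : σ ≠ 0) (hc : c ≠ 0) (x : ℝ) :
    HasDerivAt (F2 σ c) (((1 - x ^ 2 / σ ^ 2 : ℝ) : ℂ) * Complex.exp (-Complex.I * c * x)) x := by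
  have h1 : HasDerivAt (fun x : ℝ => Complex.exp (-Complex.I * c * x))
      ((-Complex.I * c) * Complex.exp (-Complex.I * c * x)) x := by
    have hx : HasDerivAt (fun y : ℝ => (y : ℂ)) 1 x := Complex.ofRealCLM.hasDerivAt
    have := ((Complex.hasDerivAt_exp (-Complex.I * c * x)).comp x
      (hx.const_mul (-Complex.I * c)))
    simpa [mul_comm, Function.comp_def] using this
  have h2 : HasDerivAt (fun x : ℝ => ((-Complex.I * c ^ 2 * (x:ℂ) ^ 2 - 2 * c * x
      + 2 * Complex.I + Complex.I * c ^ 2 * σ ^ 2) / (c ^ 3 * σ ^ 2)))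
      ((-Complex.I * c ^ 2 * (2 * x) - 2 * c) / (c ^ 3 * σ ^ 2)) x := by
    have hx : HasDerivAt (fun y : ℝ => (y : ℂ)) 1 x := Complex.ofRealCLM.hasDerivAt
    have hx2 : HasDerivAt (fun y : ℝ => ((y : ℂ)) ^ 2) (2 * x) x := by
      have := hx.mul hx
      simpa [pow_two, two_mul, Pi.mul_def] using this
    have := ((((hx2.const_mul (-Complex.I * (c:ℂ) ^ 2)).sub
      (hx.const_mul (2 * (c:ℂ)))).add_const (2 * Complex.I)).add_const
      (Complex.I * (c:ℂ) ^ 2 * (σ:ℂ) ^ 2)).div_const ((c:ℂ) ^ 3 * (σ:ℂ) ^ 2)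
    exact this.congr_deriv (by ring)
  have := h1.mul h2
  refine this.congr_deriv ?_
  have hc' : (c : ℂ) ≠ 0 := Complex.ofReal_ne_zero.2 hc
  have hσ' : (σ : ℂ) ≠ 0 := Complex.ofReal_ne_zero.2 hσ
  push_cast
  field_simp
  ring_nf
  simp only [Complex.I_sq]
  ring

/-- The even bump `max (1 - x²/σ²) 0`. -/
noncomputable def gbump (σ : ℝ) (x : ℝ) : ℂ := ((max (1 - x ^ 2 / σ ^ 2) 0 : ℝ) : ℂ)

lemma sub_sq_nonneg_iff {σ x : ℝ} (hσ : 0 < σ) : 0 ≤ 1 - x ^ 2 / σ ^ 2 ↔ |x| ≤ σ := by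
  rw [sub_nonneg, div_le_one (by positivity), sq_le_sq, abs_of_pos hσ]

lemma gbump_eq_if {σ : ℝ} (hσ : 0 < σ) (x : ℝ) :
    gbump σ x = if |x| ≤ σ then ((1 - x ^ 2 / σ ^ 2 : ℝ) : ℂ) else 0 := by
  unfold gbump
  by_cases h : |x| ≤ σ
  · rw [if_pos h, max_eq_left ((sub_sq_nonneg_iff hσ).2 h)]
  · rw [if_neg h, max_eq_right, Complex.ofReal_zero]
    by_contra h'
    exact h ((sub_sq_nonneg_iff hσ).1 (le_of_not_ge h'))

lemma gbump_continuous (σ : ℝ) : Continuous (gbump σ) := by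
  unfold gbump; fun_prop

lemma gbump_integrable {σ : ℝ} (hσ : 0 < σ) : Integrable (gbump σ) := by
  apply (gbump_continuous σ).integrable_of_hasCompactSupport
  apply HasCompactSupport.intro (isCompact_Icc (a := -σ) (b := σ))
  intro x hx
  rw [gbump_eq_if hσ, if_neg]
  rw [Set.mem_Icc, not_and_or] at hx
  intro h
  rcases hx with hx | hx <;> rcases abs_le.1 h with ⟨h1, h2⟩ <;> [exact hx h1; exact hx h2]

lemma integral_bump {σ : ℝ} (hσ : 0 < σ) {c : ℝ} (hc : c ≠ 0) :
    ∫ x in (-σ)..σ, ((1 - x ^ 2 / σ ^ 2 : ℝ) : ℂ) * Complex.exp (-Complex.I * c * x)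
      = ((4 / (c ^ 2 * σ) * (Real.sin (c * σ) / (c * σ) - Real.cos (c * σ)) : ℝ) : ℂ) := by
  rw [intervalIntegral.integral_eq_sub_of_hasDerivAt
    (fun x _ => F2_hasDerivAt σ c hσ.ne' hc x) (by apply Continuous.intervalIntegrable; fun_prop)]
  unfold F2
  have e1 : Complex.exp (-Complex.I * c * σ)
      = Complex.cos (c * σ) - Complex.sin (c * σ) * Complex.I := by
    rw [show (-Complex.I * c * σ : ℂ) = (-(c * σ) : ℂ) * Complex.I by push_cast; ring,
      Complex.exp_mul_I, Complex.cos_neg, Complex.sin_neg]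
    ring
  have e2 : Complex.exp (-Complex.I * c * (-σ : ℝ))
      = Complex.cos (c * σ) + Complex.sin (c * σ) * Complex.I := by
    rw [show (-Complex.I * c * ((-σ : ℝ) : ℂ) : ℂ) = ((c * σ : ℝ) : ℂ) * Complex.I by
      push_cast; ring, Complex.exp_mul_I]
    push_cast; ring
  rw [e1, e2]
  have hc' : (c : ℂ) ≠ 0 := Complex.ofReal_ne_zero.2 hc
  have hσ' : (σ : ℂ) ≠ 0 := Complex.ofReal_ne_zero.2 hσ.ne'
  push_cast
  field_simp
  ring_nf
  simp only [Complex.I_sq]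
  ring

lemma integral_gbump_exp {σ : ℝ} (hσ : 0 < σ) (c : ℝ) :
    (∫ x : ℝ, gbump σ x * Complex.exp (-Complex.I * c * x))
      = ∫ x in (-σ)..σ, ((1 - x ^ 2 / σ ^ 2 : ℝ) : ℂ) * Complex.exp (-Complex.I * c * x) := by
  rw [intervalIntegral.integral_of_le (by linarith : -σ ≤ σ),
    ← MeasureTheory.integral_indicator measurableSet_Ioc]
  · congr 1
    ext x
    rw [Set.indicator_apply, gbump_eq_if hσ]
    by_cases h : x ∈ Set.Ioc (-σ) σ
    · rw [if_pos h]
      rcases h with ⟨h1, h2⟩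
      by_cases h0 : |x| ≤ σ
      · rw [if_pos h0]
      · rw [abs_le, not_and_or] at h0
        rcases h0 with h0 | h0 <;> [exact absurd h1.le h0; exact absurd h2 h0]
    · rw [if_neg h]
      rw [Set.mem_Ioc, not_and_or] at h
      by_cases h0 : |x| ≤ σ
      · rw [if_pos h0]
        rcases abs_le.1 h0 with ⟨h1, h2⟩
        rcases h with h | h
        · have hx : x = -σ := le_antisymm (not_lt.1 h) h1
          have hz : (1 - x ^ 2 / σ ^ 2 : ℝ) = 0 := by
            rw [hx]; field_simp; norm_num
          rw [hz, Complex.ofReal_zero, zero_mul]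
        · exact absurd h2 h
      · rw [if_neg h0, zero_mul]

lemma fourier_gbump {σ : ℝ} (hσ : 0 < σ) (w : ℝ) :
    FourierTransform.fourier (gbump σ) w = ((2 * π * K2 σ (2 * π * w) : ℝ) : ℂ) := by
  rw [Real.fourier_real_eq_integral_exp_smul]
  have h1 : ∀ v : ℝ, Complex.exp (↑(-2 * π * v * w) * Complex.I) • gbump σ v
      = gbump σ v * Complex.exp (-Complex.I * ((2 * π * w : ℝ) : ℂ) * v) := by
    intro v
    rw [smul_eq_mul, mul_comm]
    congr 1
    push_cast
    ring_nf
  rw [show (∫ v : ℝ, Complex.exp (↑(-2 * π * v * w) * Complex.I) • gbump σ v)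
      = ∫ v : ℝ, gbump σ v * Complex.exp (-Complex.I * ((2 * π * w : ℝ) : ℂ) * v) from
    MeasureTheory.integral_congr_ae (Filter.Eventually.of_forall h1),
    integral_gbump_exp hσ (2 * π * w)]
  by_cases hw : w = 0
  · subst hw
    have h0 : (2 * π * (0:ℝ)) = 0 := by ring
    rw [h0]
    have h3 : ∀ x : ℝ, ((1 - x ^ 2 / σ ^ 2 : ℝ) : ℂ) * Complex.exp (-Complex.I * (0:ℝ) * x)
        = ((1 - x ^ 2 / σ ^ 2 : ℝ) : ℂ) := by
      intro x; simp
    rw [intervalIntegral.integral_congr (fun x _ => h3 x), intervalIntegral.integral_ofReal]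
    have hint : ∫ x in (-σ)..σ, (1 - x ^ 2 / σ ^ 2 : ℝ) = 4 * σ / 3 := by
      have h2 : (∫ x in (-σ)..σ, (1 - x ^ 2 / σ ^ 2 : ℝ))
          = (∫ x in (-σ)..σ, (1 : ℝ)) - (∫ x in (-σ)..σ, (x ^ 2 : ℝ)) / σ ^ 2 := by
        rw [← intervalIntegral.integral_div]
        exact intervalIntegral.integral_sub intervalIntegrable_const
          (by apply Continuous.intervalIntegrable; fun_prop)
      rw [h2, intervalIntegral.integral_const, integral_pow]
      field_simp
      ring
    rw [hint]
    norm_cast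
    rw [K2, if_pos rfl]
    have hπ : (π : ℝ) ≠ 0 := Real.pi_ne_zero
    field_simp
    ring
  · have hc : (2 * π * w) ≠ 0 := by
      simp [Real.pi_ne_zero, hw]
    rw [integral_bump hσ hc]
    congr 1
    rw [K2, if_neg hc]
    set t := 2 * π * w with ht
    have htσ : σ * t ≠ 0 := mul_ne_zero hσ.ne' hc
    rw [mul_comm t σ] at *
    field_simp
    ring

lemma abs_sin_sub_mul_cos_le (y : ℝ) : |Real.sin y - y * Real.cos y| ≤ |y| ^ 3 := by
  have hd : ∀ t : ℝ, HasDerivAt (fun t : ℝ => Real.sin t - t * Real.cos t)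
      (t * Real.sin t) t := by
    intro t
    have h2 := (hasDerivAt_id t).mul (Real.hasDerivAt_cos t)
    have := (Real.hasDerivAt_sin t).sub h2
    refine this.congr_deriv ?_
    simp only [id]; ring
  have hftc : ∫ t in (0:ℝ)..y, t * Real.sin t = Real.sin y - y * Real.cos y := by
    rw [intervalIntegral.integral_eq_sub_of_hasDerivAt (fun t _ => hd t)
      (by apply Continuous.intervalIntegrable; fun_prop)]
    simp
  rw [← hftc]
  have := intervalIntegral.norm_integral_le_of_norm_le_const
    (C := y ^ 2) (f := fun t : ℝ => t * Real.sin t) (a := 0) (b := y) ?_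
  · rw [Real.norm_eq_abs] at this
    calc |∫ t in (0:ℝ)..y, t * Real.sin t| ≤ y ^ 2 * |y - 0| := this
    _ = |y| ^ 3 := by
          rw [sub_zero, ← _root_.sq_abs y]; ring
  · intro x hx
    have hxy : |x| ≤ |y| := by
      rcases Set.mem_uIoc.1 hx with ⟨h1, h2⟩ | ⟨h1, h2⟩
      · rw [abs_le]; constructor
        · linarith [neg_abs_le y, abs_nonneg y]
        · exact h2.trans (le_abs_self y)
      · rw [abs_le]; constructor
        · linarith [neg_abs_le y]
        · exact h2.trans (abs_nonneg y)
    rw [Real.norm_eq_abs, abs_mul]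
    calc |x| * |Real.sin x| ≤ |x| * |x| :=
          mul_le_mul_of_nonneg_left Real.abs_sin_le_abs (abs_nonneg x)
    _ ≤ |y| * |y| := mul_le_mul hxy hxy (abs_nonneg x) (abs_nonneg y)
    _ = y ^ 2 := by rw [← _root_.sq_abs y]; ring

lemma K2_abs_eq {σ : ℝ} (hσ : 0 < σ) {t : ℝ} (ht : t ≠ 0) :
    |K2 σ t| = (2 * σ / π) * |Real.sin (σ * t) - (σ * t) * Real.cos (σ * t)| / |σ * t| ^ 3 := by
  have hx : σ * t ≠ 0 := mul_ne_zero hσ.ne' ht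
  rw [K2, if_neg ht]
  have h1 : Real.sin (σ * t) / (σ * t) - Real.cos (σ * t)
      = (Real.sin (σ * t) - (σ * t) * Real.cos (σ * t)) / (σ * t) := by
    field_simp
  rw [h1]
  have ha : 2 * σ / π * ((Real.sin (σ * t) - σ * t * Real.cos (σ * t)) / (σ * t)) / (σ * t) ^ 2
      = (2 * σ / π) * ((Real.sin (σ * t) - σ * t * Real.cos (σ * t)) / (σ * t) ^ 3) := by
    field_simp
  rw [ha]
  simp only [_root_.abs_mul, _root_.abs_div, _root_.abs_pow,
    _root_.abs_of_pos hσ, _root_.abs_of_pos Real.pi_pos,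
    _root_.abs_of_nonneg (show (0:ℝ) ≤ 2 by norm_num)]
  ring

lemma K2_abs_le {σ : ℝ} (hσ : 0 < σ) (t : ℝ) : |K2 σ t| ≤ 2 * σ / π := by
  by_cases ht : t = 0
  · subst ht
    rw [K2, if_pos rfl,
      _root_.abs_of_nonneg (show (0:ℝ) ≤ 2 * σ / (3 * π) by have := Real.pi_pos; positivity)]
    rw [div_le_div_iff₀ (by have := Real.pi_pos; positivity) (by have := Real.pi_pos; positivity)]
    nlinarith [Real.pi_pos, hσ]
  · rw [K2_abs_eq hσ ht]
    have hx : σ * t ≠ 0 := mul_ne_zero hσ.ne' ht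
    have hx3 : (0:ℝ) < |σ * t| ^ 3 := by positivity
    rw [div_le_iff₀ hx3]
    have := abs_sin_sub_mul_cos_le (σ * t)
    calc (2 * σ / π) * |Real.sin (σ * t) - σ * t * Real.cos (σ * t)|
        ≤ (2 * σ / π) * |σ * t| ^ 3 := by
          apply mul_le_mul_of_nonneg_left this (by positivity)
    _ = 2 * σ / π * |σ * t| ^ 3 := rfl

lemma K2_abs_le' {σ : ℝ} (hσ : 0 < σ) {t : ℝ} (ht : t ≠ 0) :
    |K2 σ t| ≤ (2 * σ / π) * (1 + |σ * t|) / |σ * t| ^ 3 := by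
  rw [K2_abs_eq hσ ht]
  gcongr
  calc |Real.sin (σ * t) - (σ * t) * Real.cos (σ * t)|
      ≤ |Real.sin (σ * t)| + |(σ * t) * Real.cos (σ * t)| := abs_sub _ _
  _ ≤ 1 + |σ * t| := by
      apply add_le_add (Real.abs_sin_le_one _)
      rw [abs_mul]
      calc |σ * t| * |Real.cos (σ * t)| ≤ |σ * t| * 1 :=
            mul_le_mul_of_nonneg_left (Real.abs_cos_le_one _) (abs_nonneg _)
      _ = |σ * t| := mul_one _

lemma K2_integrable {σ : ℝ} (hσ : 0 < σ) : Integrable (fun t : ℝ => K2 σ t) := by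
  set C : ℝ := (2 * σ / π) * (1 + 1 / σ ^ 2) + (4 / (π * σ)) * (σ ^ 2 + 1) with hC
  have hbound : ∀ t : ℝ, |K2 σ t| ≤ C / (1 + t ^ 2) := by
    intro t
    have h1t : (0:ℝ) < 1 + t ^ 2 := by positivity
    rw [le_div_iff₀ h1t]
    by_cases hcase : |t| ≤ 1 / σ
    · calc |K2 σ t| * (1 + t ^ 2) ≤ (2 * σ / π) * (1 + 1 / σ ^ 2) := by
            apply mul_le_mul (K2_abs_le hσ t) ?_ (by positivity) (by positivity)
            have : t ^ 2 ≤ 1 / σ ^ 2 := by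
              rw [← _root_.sq_abs t]
              calc |t| ^ 2 ≤ (1 / σ) ^ 2 := by
                    apply pow_le_pow_left₀ (abs_nonneg t) hcase
              _ = 1 / σ ^ 2 := by rw [div_pow, one_pow]
            linarith
      _ ≤ C := by
            rw [hC]
            have : (0:ℝ) ≤ (4 / (π * σ)) * (σ ^ 2 + 1) := by positivity
            linarith
    · push_neg at hcase
      have ht : t ≠ 0 := by
        intro h; rw [h, abs_zero] at hcase
        exact absurd hcase (not_lt.2 (by positivity))
      have hst : 1 ≤ |σ * t| := by
        rw [abs_mul, abs_of_pos hσ]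
        rw [div_lt_iff₀ hσ] at hcase
        nlinarith
      have hst0 : (0:ℝ) < |σ * t| := lt_of_lt_of_le one_pos hst
      calc |K2 σ t| * (1 + t ^ 2)
          ≤ ((2 * σ / π) * (1 + |σ * t|) / |σ * t| ^ 3) * (1 + t ^ 2) := by
            apply mul_le_mul_of_nonneg_right (K2_abs_le' hσ ht) (by positivity)
      _ ≤ ((2 * σ / π) * (2 * |σ * t|) / |σ * t| ^ 3) * (1 + t ^ 2) := by
            apply mul_le_mul_of_nonneg_right ?_ (by positivity)
            apply (div_le_div_iff_of_pos_right (show (0:ℝ) < |σ * t| ^ 3 by positivity)).2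
            apply mul_le_mul_of_nonneg_left (by linarith) (by positivity)
      _ = (4 / (π * σ)) * ((1 + t ^ 2) / t ^ 2) := by
            rw [show t ^ 2 = |t| ^ 2 from (_root_.sq_abs t).symm,
              abs_mul, _root_.abs_of_pos hσ]
            have hσa : σ ≠ 0 := hσ.ne'
            have hta : |t| ≠ 0 := abs_ne_zero.2 ht
            have hπ : (π:ℝ) ≠ 0 := Real.pi_ne_zero
            field_simp
            norm_num
      _ ≤ (4 / (π * σ)) * (σ ^ 2 + 1) := by
            apply mul_le_mul_of_nonneg_left ?_ (by positivity)
            rw [div_le_iff₀ (by positivity : (0:ℝ) < t ^ 2)]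
            have ht2 : 1 / σ ^ 2 ≤ t ^ 2 := by
              rw [← _root_.sq_abs t]
              calc 1 / σ ^ 2 = (1 / σ) ^ 2 := by rw [div_pow, one_pow]
              _ ≤ |t| ^ 2 := pow_le_pow_left₀ (by positivity) hcase.le 2
            have h1 : 1 ≤ t ^ 2 * σ ^ 2 :=
              (div_le_iff₀ (by positivity : (0:ℝ) < σ ^ 2)).1 ht2
            nlinarith
      _ ≤ C := by
            rw [hC]
            have : (0:ℝ) ≤ (2 * σ / π) * (1 + 1 / σ ^ 2) := by positivity
            linarith
  have hmeas : AEStronglyMeasurable (fun t : ℝ => K2 σ t) volume := by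
    apply Measurable.aestronglyMeasurable
    unfold K2
    apply Measurable.ite (measurableSet_eq)
    · exact measurable_const
    · fun_prop
  apply Integrable.mono' ((integrable_inv_one_add_sq).const_mul C) hmeas
  filter_upwards with t
  rw [Real.norm_eq_abs]
  calc |K2 σ t| ≤ C / (1 + t ^ 2) := hbound t
  _ = C * (1 + t ^ 2)⁻¹ := by rw [div_eq_mul_inv]

theorem K2_fourier_transform (σ : ℝ) (hσ : 0 < σ) :
    Integrable (fun t : ℝ => K2 σ t) volume ∧
    ∀ ξ : ℝ, (∫ t : ℝ, (K2 σ t : ℂ) * Complex.exp (-Complex.I * ξ * t))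
      = if |ξ| ≤ σ then ((1 - ξ ^ 2 / σ ^ 2 : ℝ) : ℂ) else 0 := by
  refine ⟨K2_integrable hσ, fun ξ => ?_⟩
  set h : ℝ → ℂ := fun t => (K2 σ t : ℂ) * Complex.exp (-Complex.I * ξ * t) with hh
  have hint2 : Integrable (fun w : ℝ => ((2 * π * K2 σ (2 * π * w) : ℝ) : ℂ)) := by
    have h2π : (2 * π : ℝ) ≠ 0 := by simp [Real.pi_ne_zero]
    have := ((K2_integrable hσ).comp_mul_left' h2π).const_mul (2 * π)
    exact this.ofReal
  have h𝓕int : Integrable (FourierTransform.fourier (gbump σ)) :=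
    hint2.congr (Filter.EventuallyEq.symm (Filter.Eventually.of_forall (fourier_gbump hσ)))
  have hinv := (gbump_integrable hσ).fourierInv_fourier_eq h𝓕int
    ((gbump_continuous σ).continuousAt (x := -ξ))
  rw [Real.fourierInv_eq_fourier_neg, neg_neg] at hinv
  have key : (∫ t : ℝ, h t) = FourierTransform.fourier (FourierTransform.fourier (gbump σ)) ξ := by
    rw [Real.fourier_real_eq_integral_exp_smul]
    have hpt : ∀ v : ℝ, Complex.exp (↑(-2 * π * v * ξ) * Complex.I) •
        FourierTransform.fourier (gbump σ) v = (2 * π : ℝ) • h (2 * π * v) := by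
      intro v
      rw [fourier_gbump hσ v, smul_eq_mul, hh]
      simp only
      rw [show (↑(-2 * π * v * ξ) * Complex.I : ℂ)
          = -Complex.I * ξ * ((2 * π * v : ℝ) : ℂ) by push_cast; ring]
      rw [Complex.real_smul]
      push_cast
      ring
    rw [MeasureTheory.integral_congr_ae (Filter.Eventually.of_forall hpt), integral_smul,
      MeasureTheory.Measure.integral_comp_mul_left h (2 * π)]
    have h2π : (0:ℝ) < 2 * π := by positivity
    rw [abs_of_pos (inv_pos.2 h2π), smul_smul, mul_inv_cancel₀ h2π.ne', one_smul]
  rw [key, hinv, gbump_eq_if hσ, abs_neg, neg_sq]
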